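/- arXiv:2603.07809 — 5 statements merged into one kernel-verified Lean document; each statement's English description precedes it below -/
import Mathlib

section
/- Let G be a finite graph whose vertices lie on a vertical line (so the vertex set is totally ordered by height), possibly with multiple edges. If for every vertex v both ldeg_G(v) (the number of edges, counted with multiplicity, from v to lower vertices) and hdeg_G(v) (the number of edges to higher vertices) are even, then the edge set of G can be partitioned into alternating cycles, i.e., closed trails whose consecutive edges alternate between up-edges and down-edges. -/
/-! Common definitions: vertical (multi)graphs on `Fin n` (vertices ordered by height,
vertex `v` at height `(v : ℕ)`), edges stored as pairs `(lower, upper)`. -/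

/-- Number of edges of `E` from `v` to strictly lower vertices
(i.e. edges whose upper endpoint is `v`), with multiplicity. -/
def ldeg {n : ℕ} (E : Multiset (Fin n × Fin n)) (v : Fin n) : ℕ :=
  (E.filter (fun e => e.2 = v)).card

/-- Number of edges of `E` from `v` to strictly higher vertices
(i.e. edges whose lower endpoint is `v`), with multiplicity. -/
def hdeg {n : ℕ} (E : Multiset (Fin n × Fin n)) (v : Fin n) : ℕ :=
  (E.filter (fun e => e.1 = v)).card

/-- An alternating cycle: a closed walk `w 0, w 1, …, w (2m) = w 0` whose edges
alternately go up and down (odd-indexed vertices are above both cyclic neighbours). -/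
structure AltCycle (n : ℕ) where
  m : ℕ
  pos : 0 < m
  w : ℕ → Fin n
  closed : w (2 * m) = w 0
  up : ∀ j < m, w (2 * j) < w (2 * j + 1)
  down : ∀ j < m, w (2 * j + 2) < w (2 * j + 1)

/-- The up-edges of an alternating cycle (as `(lower, upper)` pairs). -/
def AltCycle.upEdges {n : ℕ} (C : AltCycle n) : Multiset (Fin n × Fin n) :=
  (Multiset.range C.m).map (fun j => (C.w (2 * j), C.w (2 * j + 1)))

/-- The down-edges of an alternating cycle (as `(lower, upper)` pairs). -/
def AltCycle.downEdges {n : ℕ} (C : AltCycle n) : Multiset (Fin n × Fin n) :=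
  (Multiset.range C.m).map (fun j => (C.w (2 * j + 2), C.w (2 * j + 1)))

/-- All edges of an alternating cycle. -/
def AltCycle.edges {n : ℕ} (C : AltCycle n) : Multiset (Fin n × Fin n) :=
  C.upEdges + C.downEdges

/-- The edge multiset `E` can be partitioned into alternating cycles. -/
def AltPartition {n : ℕ} (E : Multiset (Fin n × Fin n)) : Prop :=
  ∃ (k : ℕ) (Cs : Fin k → AltCycle n), E = ∑ i, (Cs i).edges

/-- The undirected edge between `a` and `b`, stored as a `(lower, upper)` pair. -/
def stepEdge {n : ℕ} (a b : Fin n) : Fin n × Fin n := if a < b then (a, b) else (b, a)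

/-- `E` contains a (vertex-simple) cycle: a closed walk with pairwise distinct vertices
whose (undirected) edge multiset is contained in `E`. -/
def HasCycle {n : ℕ} (E : Multiset (Fin n × Fin n)) : Prop :=
  ∃ (len : ℕ) (w : ℕ → Fin n), 0 < len ∧ w len = w 0 ∧
    (∀ i < len, ∀ j < len, w i = w j → i = j) ∧
    ((Multiset.range len).map (fun j => stepEdge (w j) (w (j + 1)))) ≤ E

/-- Reachability (connectivity) in the multigraph with edge multiset `E`. -/
def Reach {n : ℕ} (E : Multiset (Fin n × Fin n)) (a b : Fin n) : Prop :=
  Relation.ReflTransGen (fun x y => (x, y) ∈ E ∨ (y, x) ∈ E) a b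

/-- The connected component of `v` in `E` is a single vertex or a path along
vertices of strictly increasing height. -/
def IncPathComp {n : ℕ} (E : Multiset (Fin n × Fin n)) (v : Fin n) : Prop :=
  ∃ (m : ℕ) (p : Fin (m + 1) → Fin n), StrictMono p ∧
    (∀ u, Reach E v u ↔ ∃ i, p i = u) ∧
    (∀ i : Fin m, (p i.castSucc, p i.succ) ∈ E)

/-- The edges present at stage `j` of the upward lower-star filtration:
those whose upper endpoint has height at most `j`. -/
def levelEdges {n : ℕ} (E : Multiset (Fin n × Fin n)) (j : ℕ) : Multiset (Fin n × Fin n) :=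
  E.filter (fun e => (e.2 : ℕ) ≤ j)

/-- Death time (elder rule) of the 0-dimensional class created by vertex `v` in the
upward lower-star filtration: the first height at which `v` gets connected to a
strictly lower (older) vertex, or `∞` if this never happens. -/
noncomputable def death0 {n : ℕ} (E : Multiset (Fin n × Fin n)) (v : Fin n) : ℕ∞ :=
  sInf ((fun j : ℕ => (j : ℕ∞)) '' {j : ℕ | ∃ u, u < v ∧ Reach (levelEdges E j) u v})

/-- The 0-dimensional verbose persistence diagram in the up direction: one point
per vertex, born at the height of the vertex. -/
noncomputable def diag0 {n : ℕ} (E : Multiset (Fin n × Fin n)) : Multiset (ℕ × ℕ∞) :=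
  (Finset.univ.val : Multiset (Fin n)).map (fun v : Fin n => ((v : ℕ), death0 E v))

/-- Number of edges entering at height `j` (upper endpoint of height `j`). -/
def edgesAt {n : ℕ} (E : Multiset (Fin n × Fin n)) (j : ℕ) : ℕ :=
  (E.filter (fun e => (e.2 : ℕ) = j)).card

/-- Number of 0-dimensional points dying at height `j` in the verbose diagram. -/
noncomputable def deaths0At {n : ℕ} (E : Multiset (Fin n × Fin n)) (j : ℕ) : ℕ :=
  Nat.card {v : Fin n // death0 E v = (j : ℕ∞)}

/-- Number of 1-dimensional classes born at height `j`: edges entering at height `j`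
that are creators rather than destructors. -/
noncomputable def cyclesBornAt {n : ℕ} (E : Multiset (Fin n × Fin n)) (j : ℕ) : ℕ :=
  edgesAt E j - deaths0At E j

/-- The graph with the vertical order reversed (for the down direction). -/
def flipE {n : ℕ} (E : Multiset (Fin n × Fin n)) : Multiset (Fin n × Fin n) :=
  E.map (fun e => (e.2.rev, e.1.rev))

/-- Equality of the verbose persistence diagrams in the up direction. -/
def UpDiagEq {n : ℕ} (E1 E2 : Multiset (Fin n × Fin n)) : Prop :=
  diag0 E1 = diag0 E2 ∧ ∀ j, cyclesBornAt E1 j = cyclesBornAt E2 j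

/-- Equality of VPHTs for vertical graphs: the verbose diagrams agree in both the
up and the down direction. -/
def VPHTEq {n : ℕ} (E1 E2 : Multiset (Fin n × Fin n)) : Prop :=
  UpDiagEq E1 E2 ∧ UpDiagEq (flipE E1) (flipE E2)

/-- Number of connected components of the multigraph with edge multiset `E`. -/
noncomputable def numComponents {n : ℕ} (E : Multiset (Fin n × Fin n)) : ℕ :=
  Nat.card (Quot (Reach E))

/-- The edge multiset `E` can be partitioned into cycles (closed trails). -/
def CircuitPartition {n : ℕ} (E : Multiset (Fin n × Fin n)) : Prop :=
  ∃ (k : ℕ) (len : Fin k → ℕ) (w : Fin k → ℕ → Fin n),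
    (∀ i, 0 < len i) ∧ (∀ i, w i (len i) = w i 0) ∧
    (∀ i, ∀ j < len i, w i j ≠ w i (j + 1)) ∧
    (∑ i, (Multiset.range (len i)).map (fun j => stepEdge (w i j) (w i (j + 1)))) = E

/-! Split every vertex `v` into a copy `v⁺` carrying its up-edges and a copy `v⁻` carrying its
down-edges, so that an edge `(a, b)` with `a < b` joins `a⁺` to `b⁻`. Alternating cycles are then
exactly the closed walks of this bipartite multigraph, and `hdeg`, `ldeg` are its degrees, so the
claim is Veblen's theorem for bipartite multigraphs. To find a closed walk through an edge `(a, b)`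
of an even multigraph, take a second edge `(c, b)` at `b`: if `c = a` these two edges form a closed
walk; otherwise take a second edge `(c, d)` at `c` and replace the path `a, b, c, d` by a single edge
`(a, d)`. This keeps all degrees even and removes two edges, and a closed walk through `(a, d)`
becomes one through `(a, b)` by reinserting the detour. -/

section ClosedWalk

variable {α β γ : Type*}

lemma Multiset.map_range_succ' (f : ℕ → γ) (m : ℕ) :
    (Multiset.range (m + 1)).map f = f 0 ::ₘ (Multiset.range m).map (fun j => f (j + 1)) := by
  rw [add_comm, Multiset.range_add]
  simp [add_comm]

lemma Multiset.map_range_succ_eq_of_eq {f : ℕ → γ} {m : ℕ} (h : f m = f 0) :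
    (Multiset.range m).map (fun j => f (j + 1)) = (Multiset.range m).map f := by
  cases m with
  | zero => rfl
  | succ k =>
    conv_lhs => rw [Multiset.range_succ, Multiset.map_cons]
    rw [h, Multiset.map_range_succ']

structure BipartiteClosedWalk (α β : Type*) where
  m : ℕ
  pos : 0 < m
  x : ℕ → α
  y : ℕ → β
  closed : x m = x 0

namespace BipartiteClosedWalk

def edges (C : BipartiteClosedWalk α β) : Multiset (α × β) :=
  (Multiset.range C.m).map (fun j => (C.x j, C.y j)) +
    (Multiset.range C.m).map (fun j => (C.x (j + 1), C.y j))

def double (a : α) (b : β) : BipartiteClosedWalk α β :=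
  ⟨1, one_pos, fun _ => a, fun _ => b, rfl⟩

lemma double_edges (a : α) (b : β) : (double a b).edges = {(a, b), (a, b)} := rfl

lemma x_y_mem_edges (C : BipartiteClosedWalk α β) {j : ℕ} (hj : j < C.m) :
    (C.x j, C.y j) ∈ C.edges :=
  Multiset.mem_add.mpr (.inl (Multiset.mem_map.mpr ⟨j, Multiset.mem_range.mpr hj, rfl⟩))

lemma x_succ_y_mem_edges (C : BipartiteClosedWalk α β) {j : ℕ} (hj : j < C.m) :
    (C.x (j + 1), C.y j) ∈ C.edges :=
  Multiset.mem_add.mpr (.inr (Multiset.mem_map.mpr ⟨j, Multiset.mem_range.mpr hj, rfl⟩))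

/-- Replaces the first edge `(x 0, y 0)` of `C` by the path `x 0, b, c, y 0`. -/
def detour (C : BipartiteClosedWalk α β) (b : β) (c : α) : BipartiteClosedWalk α β where
  m := C.m + 1
  pos := C.m.succ_pos
  x k := if k = 1 then c else C.x (k - 1)
  y k := if k = 0 then b else C.y (k - 1)
  closed := by simp [C.pos.ne', C.closed]

lemma detour_edges (C : BipartiteClosedWalk α β) (b : β) (c : α) :
    (C.x 0, C.y 0) ::ₘ (C.detour b c).edges =
      (C.x 0, b) ::ₘ (c, b) ::ₘ (c, C.y 0) ::ₘ C.edges := by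
  obtain ⟨k, hk⟩ := Nat.exists_eq_add_one.mpr C.pos
  simp only [edges, detour, hk, Multiset.map_range_succ']
  simp [Multiset.cons_swap]

def vertexSeq (C : BipartiteClosedWalk α α) (k : ℕ) : α :=
  if k % 2 = 0 then C.x (k / 2) else C.y (k / 2)

lemma vertexSeq_two_mul (C : BipartiteClosedWalk α α) (j : ℕ) : C.vertexSeq (2 * j) = C.x j := by
  simp [vertexSeq]

lemma vertexSeq_two_mul_add_one (C : BipartiteClosedWalk α α) (j : ℕ) :
    C.vertexSeq (2 * j + 1) = C.y j := by
  rw [vertexSeq, if_neg (by omega), show (2 * j + 1) / 2 = j by omega]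

lemma vertexSeq_two_mul_add_two (C : BipartiteClosedWalk α α) (j : ℕ) :
    C.vertexSeq (2 * j + 2) = C.x (j + 1) := by
  rw [← C.vertexSeq_two_mul, mul_add, mul_one]

end BipartiteClosedWalk

end ClosedWalk

section EvenDegrees

variable {α β γ : Type*} [DecidableEq α] [DecidableEq β] [DecidableEq γ]

def EvenCounts (s : Multiset γ) : Prop := ∀ a, Even (s.count a)

lemma evenCounts_add_self (s : Multiset γ) : EvenCounts (s + s) := fun a => by
  rw [Multiset.count_add]
  exact Even.add_self _

lemma EvenCounts.of_add_left {s t : Multiset γ} (hst : EvenCounts (s + t)) (hs : EvenCounts s) :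
    EvenCounts t := fun a => by
  have := hst a
  rw [Multiset.count_add, Nat.even_add] at this
  exact this.mp (hs a)

lemma evenCounts_cons_cons_iff {a : γ} {s : Multiset γ} :
    EvenCounts (a ::ₘ a ::ₘ s) ↔ EvenCounts s := by
  refine forall_congr' fun b => ?_
  by_cases hb : b = a
  · simp [hb, Nat.even_add_one]
  · simp [hb]

lemma EvenCounts.mem_of_cons {a : γ} {s : Multiset γ} (h : EvenCounts (a ::ₘ s)) : a ∈ s := by
  have := h a
  rw [Multiset.count_cons_self, Nat.even_add_one] at this
  exact Multiset.count_pos.mp (Nat.pos_of_ne_zero (by rintro h0; simp [h0] at this))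

def EvenDegrees (E : Multiset (α × β)) : Prop :=
  EvenCounts (E.map Prod.fst) ∧ EvenCounts (E.map Prod.snd)

lemma BipartiteClosedWalk.evenDegrees_edges (C : BipartiteClosedWalk α β) :
    EvenDegrees C.edges := by
  constructor
  · have := Multiset.map_range_succ_eq_of_eq C.closed
    simp only [BipartiteClosedWalk.edges, Multiset.map_add, Multiset.map_map, Function.comp_def]
    rw [this]
    exact evenCounts_add_self _
  · simp only [BipartiteClosedWalk.edges, Multiset.map_add, Multiset.map_map, Function.comp_def]
    exact evenCounts_add_self _

lemma EvenDegrees.of_add_left {E F : Multiset (α × β)} (hEF : EvenDegrees (E + F))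
    (hE : EvenDegrees E) : EvenDegrees F := by
  simp only [EvenDegrees, Multiset.map_add] at hEF
  exact ⟨hEF.1.of_add_left hE.1, hEF.2.of_add_left hE.2⟩

end EvenDegrees

section Decomposition

variable {α β : Type*} [DecidableEq α] [DecidableEq β]

namespace BipartiteClosedWalk

theorem exists_edges_le_of_mem {E : Multiset (α × β)} (hE : EvenDegrees E) {a : α} {b : β}
    (hab : (a, b) ∈ E) : ∃ C : BipartiteClosedWalk α β, C.x 0 = a ∧ C.y 0 = b ∧ C.edges ≤ E := by
  induction hN : E.card using Nat.strong_induction_on generalizing E b with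
  | _ N IH =>
  obtain ⟨R, rfl⟩ := Multiset.exists_cons_of_mem hab
  obtain ⟨⟨c, b'⟩, hcb, rfl : b = b'⟩ : ∃ f ∈ R, b = f.2 := by
    have h₂ := hE.2
    simp only [Multiset.map_cons] at h₂
    simpa [eq_comm] using h₂.mem_of_cons
  obtain ⟨R₁, rfl⟩ := Multiset.exists_cons_of_mem hcb
  by_cases hca : c = a
  · subst hca
    exact ⟨double c b, rfl, rfl, by simp [double_edges]⟩
  obtain ⟨⟨c', d⟩, hcd, rfl : c = c'⟩ : ∃ g ∈ R₁, c = g.1 := by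
    have h₁ := hE.1
    simp only [Multiset.map_cons] at h₁
    rw [Multiset.cons_swap] at h₁
    simpa [hca, eq_comm] using h₁.mem_of_cons
  obtain ⟨R₂, rfl⟩ := Multiset.exists_cons_of_mem hcd
  -- Short-circuit the path `a, b, c, d` by the single edge `(a, d)`.
  have hE' : EvenDegrees ((a, d) ::ₘ R₂) := by
    obtain ⟨h₁, h₂⟩ := hE
    simp only [EvenDegrees, Multiset.map_cons] at h₁ h₂ ⊢
    rw [Multiset.cons_swap a, Multiset.cons_swap a, evenCounts_cons_cons_iff] at h₁
    rw [evenCounts_cons_cons_iff] at h₂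
    exact ⟨h₁, h₂⟩
  obtain ⟨C, hCa, hCd, hC⟩ := IH _ (by simp [← hN]) hE' (Multiset.mem_cons_self _ _) rfl
  refine ⟨C.detour b c, hCa, rfl, ?_⟩
  rw [← Multiset.cons_le_cons_iff (a, d)]
  calc (a, d) ::ₘ (C.detour b c).edges = (a, b) ::ₘ (c, b) ::ₘ (c, d) ::ₘ C.edges := by
        rw [← hCa, ← hCd, detour_edges]
    _ ≤ (a, b) ::ₘ (c, b) ::ₘ (c, d) ::ₘ (a, d) ::ₘ R₂ := by simpa using hC
    _ = _ := by simp [Multiset.cons_swap]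

theorem exists_sum_edges_eq {E : Multiset (α × β)} (hE : EvenDegrees E) :
    ∃ (k : ℕ) (Cs : Fin k → BipartiteClosedWalk α β), E = ∑ i, (Cs i).edges := by
  induction hN : E.card using Nat.strong_induction_on generalizing E with
  | _ N IH =>
  obtain rfl | ⟨⟨a, b⟩, hab⟩ := E.empty_or_exists_mem
  · exact ⟨0, Fin.elim0, by simp⟩
  obtain ⟨C, -, -, hC⟩ := exists_edges_le_of_mem hE hab
  obtain ⟨F, rfl⟩ := Multiset.le_iff_exists_add.mp hC
  have hcard : F.card < N := by
    simpa [← hN, edges] using C.pos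
  obtain ⟨k, Cs, rfl⟩ := IH F.card hcard (hE.of_add_left C.evenDegrees_edges) rfl
  exact ⟨k + 1, Fin.cons C Cs, by simp [Fin.sum_univ_succ]⟩

end BipartiteClosedWalk

end Decomposition

namespace BipartiteClosedWalk

variable {n : ℕ}

def toAltCycle (C : BipartiteClosedWalk (Fin n) (Fin n)) (hC : ∀ e ∈ C.edges, e.1 < e.2) :
    AltCycle n where
  m := C.m
  pos := C.pos
  w := C.vertexSeq
  closed := by rw [C.vertexSeq_two_mul, C.closed, ← C.vertexSeq_two_mul 0]
  up j hj := by
    rw [C.vertexSeq_two_mul, C.vertexSeq_two_mul_add_one]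
    exact hC _ (C.x_y_mem_edges hj)
  down j hj := by
    rw [C.vertexSeq_two_mul_add_two, C.vertexSeq_two_mul_add_one]
    exact hC _ (C.x_succ_y_mem_edges hj)

lemma toAltCycle_edges (C : BipartiteClosedWalk (Fin n) (Fin n)) (hC : ∀ e ∈ C.edges, e.1 < e.2) :
    (C.toAltCycle hC).edges = C.edges := by
  simp [AltCycle.edges, AltCycle.upEdges, AltCycle.downEdges, toAltCycle, edges,
    vertexSeq_two_mul, vertexSeq_two_mul_add_one, vertexSeq_two_mul_add_two]

end BipartiteClosedWalk

lemma hdeg_eq_count_map_fst {n : ℕ} (E : Multiset (Fin n × Fin n)) (v : Fin n) :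
    hdeg E v = (E.map Prod.fst).count v := by
  simp [hdeg, Multiset.count_map, eq_comm]

lemma ldeg_eq_count_map_snd {n : ℕ} (E : Multiset (Fin n × Fin n)) (v : Fin n) :
    ldeg E v = (E.map Prod.snd).count v := by
  simp [ldeg, Multiset.count_map, eq_comm]

/-- If every vertex of a vertical multigraph has an even number of
edges to lower vertices and an even number of edges to higher vertices, then the
edge multiset can be partitioned into alternating cycles. -/
theorem even_degrees_altPartition {n : ℕ} (E : Multiset (Fin n × Fin n))
    (hE : ∀ e ∈ E, e.1 < e.2)
    (h : ∀ v : Fin n, Even (ldeg E v) ∧ Even (hdeg E v)) :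
    AltPartition E := by
  have hEven : EvenDegrees E :=
    ⟨fun v => hdeg_eq_count_map_fst E v ▸ (h v).2, fun v => ldeg_eq_count_map_snd E v ▸ (h v).1⟩
  obtain ⟨k, Cs, rfl⟩ := BipartiteClosedWalk.exists_sum_edges_eq hEven
  have hCs : ∀ i, ∀ e ∈ (Cs i).edges, e.1 < e.2 := fun i e he =>
    hE e (Multiset.mem_sum.mpr ⟨i, Finset.mem_univ i, he⟩)
  exact ⟨k, fun i => (Cs i).toAltCycle (hCs i),
    by simp only [BipartiteClosedWalk.toAltCycle_edges]⟩
end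

section
/- A finite multigraph on a vertically ordered vertex set admits a partition of its edge set into alternating cycles if and only if every vertex has an even number of edges to strictly lower vertices and an even number of edges to strictly higher vertices. -/
/-! Every alternating cycle meets each vertex in pairs of edges on the same side, so the
degree conditions are necessary. Conversely, if all degrees are even, start at the lower end `a`
of any edge and walk alternately up and down along unused edges. After each descent the unused
edges have odd up-degree exactly at the current vertex and at `a`, so the walk can always continue
until it returns to `a`; removing the resulting cycle preserves the degree conditions, and we
induct on the number of edges. -/

section Degrees

variable {n : ℕ}

theorem ldeg_eq_count (E : Multiset (Fin n × Fin n)) (v : Fin n) :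
    ldeg E v = (E.map Prod.snd).count v := by
  simp only [ldeg, Multiset.count_map, eq_comm]

theorem hdeg_eq_count (E : Multiset (Fin n × Fin n)) (v : Fin n) :
    hdeg E v = (E.map Prod.fst).count v := by
  simp only [hdeg, Multiset.count_map, eq_comm]

@[simp]
theorem ldeg_add (A B : Multiset (Fin n × Fin n)) (v : Fin n) :
    ldeg (A + B) v = ldeg A v + ldeg B v := by
  simp only [ldeg_eq_count, Multiset.map_add, Multiset.count_add]

@[simp]
theorem hdeg_add (A B : Multiset (Fin n × Fin n)) (v : Fin n) :
    hdeg (A + B) v = hdeg A v + hdeg B v := by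
  simp only [hdeg_eq_count, Multiset.map_add, Multiset.count_add]

@[simp]
theorem ldeg_cons (e : Fin n × Fin n) (E : Multiset (Fin n × Fin n)) (v : Fin n) :
    ldeg (e ::ₘ E) v = ldeg E v + if v = e.2 then 1 else 0 := by
  simp only [ldeg_eq_count, Multiset.map_cons, Multiset.count_cons]

@[simp]
theorem hdeg_cons (e : Fin n × Fin n) (E : Multiset (Fin n × Fin n)) (v : Fin n) :
    hdeg (e ::ₘ E) v = hdeg E v + if v = e.1 then 1 else 0 := by
  simp only [hdeg_eq_count, Multiset.map_cons, Multiset.count_cons]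

theorem exists_mem_of_ldeg_pos {E : Multiset (Fin n × Fin n)} {v : Fin n}
    (h : 0 < ldeg E v) : ∃ u, (u, v) ∈ E := by
  simpa [ldeg_eq_count, Multiset.count_pos] using h

theorem exists_mem_of_hdeg_pos {E : Multiset (Fin n × Fin n)} {v : Fin n}
    (h : 0 < hdeg E v) : ∃ u, (v, u) ∈ E := by
  simpa [hdeg_eq_count, Multiset.count_pos] using h

def IsEvenDeg (E : Multiset (Fin n × Fin n)) : Prop :=
  ∀ v, Even (ldeg E v) ∧ Even (hdeg E v)

theorem isEvenDeg_zero : IsEvenDeg (0 : Multiset (Fin n × Fin n)) :=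
  fun _ => ⟨Even.zero, Even.zero⟩

theorem IsEvenDeg.add {A B : Multiset (Fin n × Fin n)} (hA : IsEvenDeg A) (hB : IsEvenDeg B) :
    IsEvenDeg (A + B) := fun v =>
  ⟨by simpa using (hA v).1.add (hB v).1, by simpa using (hA v).2.add (hB v).2⟩

theorem IsEvenDeg.of_add_left {A B : Multiset (Fin n × Fin n)} (h : IsEvenDeg (A + B))
    (hA : IsEvenDeg A) : IsEvenDeg B := fun v => by
  simpa only [ldeg_add, hdeg_add, Nat.even_add, (hA v).1, (hA v).2, true_iff] using h v

end Degrees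

theorem Multiset.map_range_add_one_eq_cons {α : Type*} (g : ℕ → α) (m : ℕ) :
    (Multiset.range (m + 1)).map g = g 0 ::ₘ (Multiset.range m).map (fun j => g (j + 1)) := by
  rw [add_comm, Multiset.range_add, Multiset.map_add, Multiset.map_map]
  simp [add_comm]

theorem Multiset.map_range_add_one_of_eq {α : Type*} (g : ℕ → α) {m : ℕ} (h : g m = g 0) :
    (Multiset.range m).map (fun j => g (j + 1)) = (Multiset.range m).map g := by
  have hfront := Multiset.map_range_add_one_eq_cons g m
  rw [Multiset.range_succ, Multiset.map_cons, h] at hfront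
  exact ((Multiset.cons_inj_right _).mp hfront).symm

namespace AltCycle

variable {n : ℕ} (C : AltCycle n)

theorem card_edges : C.edges.card = 2 * C.m := by
  simp [edges, upEdges, downEdges, two_mul]

theorem isEvenDeg_edges : IsEvenDeg C.edges := by
  have hsnd : C.downEdges.map Prod.snd = C.upEdges.map Prod.snd := by
    simp only [upEdges, downEdges, Multiset.map_map, Function.comp_def]
  have hfst : C.downEdges.map Prod.fst = C.upEdges.map Prod.fst := by
    simp only [upEdges, downEdges, Multiset.map_map, Function.comp_def]
    exact Multiset.map_range_add_one_of_eq (fun j => C.w (2 * j)) C.closed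
  intro v
  rw [edges, ldeg_add, hdeg_add, ldeg_eq_count, ldeg_eq_count, hdeg_eq_count, hdeg_eq_count,
    hsnd, hfst]
  exact ⟨Even.add_self _, Even.add_self _⟩

end AltCycle

theorem AltPartition.zero {n : ℕ} : AltPartition (0 : Multiset (Fin n × Fin n)) :=
  ⟨0, Fin.elim0, by simp⟩

theorem AltPartition.edges_add {n : ℕ} {E : Multiset (Fin n × Fin n)} (C : AltCycle n)
    (h : AltPartition E) : AltPartition (C.edges + E) := by
  obtain ⟨k, Cs, rfl⟩ := h
  exact ⟨k + 1, Fin.cons C Cs, by simp [Fin.sum_univ_succ]⟩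

structure AltWalk (n : ℕ) where
  m : ℕ
  w : ℕ → Fin n
  up : ∀ j < m, w (2 * j) < w (2 * j + 1)
  down : ∀ j < m, w (2 * j + 2) < w (2 * j + 1)

namespace AltWalk

variable {n : ℕ}

def edges (W : AltWalk n) : Multiset (Fin n × Fin n) :=
  (Multiset.range W.m).map (fun j => (W.w (2 * j), W.w (2 * j + 1))) +
    (Multiset.range W.m).map (fun j => (W.w (2 * j + 2), W.w (2 * j + 1)))

def nil (a : Fin n) : AltWalk n :=
  ⟨0, fun _ => a, by simp, by simp⟩

def consPeak (c b : Fin n) (W : AltWalk n) (hc : c < b) (hW : W.w 0 < b) : AltWalk n where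
  m := W.m + 1
  w
    | 0 => c
    | 1 => b
    | j + 2 => W.w j
  up
    | 0, _ => hc
    | j + 1, hj => W.up j (by omega)
  down
    | 0, _ => hW
    | j + 1, hj => W.down j (by omega)

theorem edges_consPeak (c b : Fin n) (W : AltWalk n) (hc : c < b) (hW : W.w 0 < b) :
    (consPeak c b W hc hW).edges = (c, b) ::ₘ (W.w 0, b) ::ₘ W.edges := by
  rw [edges, edges, show (consPeak c b W hc hW).m = W.m + 1 from rfl,
    Multiset.map_range_add_one_eq_cons, Multiset.map_range_add_one_eq_cons, Multiset.cons_add,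
    Multiset.add_cons]
  rfl

def toAltCycle (W : AltWalk n) (hpos : 0 < W.m) (hclosed : W.w (2 * W.m) = W.w 0) :
    AltCycle n :=
  ⟨W.m, hpos, W.w, hclosed, W.up, W.down⟩

end AltWalk

section Construction

variable {n : ℕ}

theorem exists_altWalk (F : Multiset (Fin n × Fin n)) (hF : ∀ e ∈ F, e.1 < e.2) (c a : Fin n)
    (hl : ∀ v, Even (ldeg F v)) (hh : ∀ v, Even (hdeg F v) ↔ (v = c ↔ v = a))
    (hc : 0 < hdeg F c) :
    ∃ W : AltWalk n, 0 < W.m ∧ W.w 0 = c ∧ W.w (2 * W.m) = a ∧ W.edges ≤ F := by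
  induction hN : F.card using Nat.strong_induction_on generalizing F c with
  | _ N ih =>
  obtain ⟨b, hcb⟩ := exists_mem_of_hdeg_pos hc
  obtain ⟨F₁, rfl⟩ := Multiset.exists_cons_of_mem hcb
  have hb : 0 < ldeg F₁ b := by
    have := hl b
    rw [ldeg_cons, if_pos rfl, Nat.even_add_one] at this
    exact (Nat.not_even_iff_odd.mp this).pos
  obtain ⟨c', hc'b⟩ := exists_mem_of_ldeg_pos hb
  obtain ⟨F₂, rfl⟩ := Multiset.exists_cons_of_mem hc'b
  have hlt : c < b := hF _ (Multiset.mem_cons_self _ _)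
  have hlt' : c' < b := hF _ (Multiset.mem_cons_of_mem (Multiset.mem_cons_self _ _))
  have hle : ∀ W : AltWalk n, W.edges ≤ F₂ → ∀ hW : W.w 0 = c',
      (AltWalk.consPeak c b W hlt (hW ▸ hlt')).edges ≤ (c, b) ::ₘ (c', b) ::ₘ F₂ := by
    intro W hWF hW
    rw [AltWalk.edges_consPeak, hW]
    exact Multiset.cons_le_cons _ (Multiset.cons_le_cons _ hWF)
  by_cases hc'a : c' = a
  · subst hc'a
    exact ⟨AltWalk.consPeak c b (AltWalk.nil c') hlt hlt', Nat.succ_pos 0, rfl, rfl,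
      hle (AltWalk.nil c') (Multiset.zero_le _) rfl⟩
  have hh₂ : ∀ v, Even (hdeg F₂ v) ↔ (v = c' ↔ v = a) := by
    intro v
    have := hh v
    rw [hdeg_cons, hdeg_cons] at this
    split_ifs at this <;> grind [Nat.even_add_one]
  have hl₂ : ∀ v, Even (ldeg F₂ v) := by
    intro v
    have := hl v
    rw [ldeg_cons, ldeg_cons] at this
    split_ifs at this <;> grind [Nat.even_add_one]
  have hc'₂ : 0 < hdeg F₂ c' :=
    (Nat.not_even_iff_odd.mp ((hh₂ c').not.mpr (by simpa using hc'a))).pos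
  obtain ⟨W, -, hW0, hWend, hWF⟩ := ih F₂.card (by simp [← hN]) F₂
    (fun e he => hF e (Multiset.mem_cons_of_mem (Multiset.mem_cons_of_mem he)))
    c' hl₂ hh₂ hc'₂ rfl
  exact ⟨AltWalk.consPeak c b W hlt (hW0 ▸ hlt'), Nat.succ_pos _, rfl, hWend, hle W hWF hW0⟩

theorem exists_altCycle_edges_le (E : Multiset (Fin n × Fin n)) (hE : ∀ e ∈ E, e.1 < e.2)
    (hev : IsEvenDeg E) (hne : E ≠ 0) : ∃ C : AltCycle n, C.edges ≤ E := by
  obtain ⟨⟨a, b⟩, hab⟩ := Multiset.exists_mem_of_ne_zero hne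
  have ha : 0 < hdeg E a := by
    rw [hdeg_eq_count, Multiset.count_pos]
    exact Multiset.mem_map_of_mem Prod.fst hab
  obtain ⟨W, hpos, hW0, hWend, hWE⟩ :=
    exists_altWalk E hE a a (fun v => (hev v).1) (fun v => by simp [(hev v).2]) ha
  exact ⟨W.toAltCycle hpos (hWend.trans hW0.symm), hWE⟩

theorem altPartition_of_isEvenDeg (E : Multiset (Fin n × Fin n)) (hE : ∀ e ∈ E, e.1 < e.2)
    (hev : IsEvenDeg E) : AltPartition E := by
  induction hN : E.card using Nat.strong_induction_on generalizing E with
  | _ N ih =>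
  rcases eq_or_ne E 0 with rfl | hne
  · exact AltPartition.zero
  obtain ⟨C, hC⟩ := exists_altCycle_edges_le E hE hev hne
  obtain ⟨E', rfl⟩ := Multiset.le_iff_exists_add.mp hC
  have hcard : E'.card < N := by
    rw [← hN, Multiset.card_add, C.card_edges]
    have := C.pos
    omega
  exact (ih _ hcard E' (fun e he => hE e (Multiset.mem_add.mpr (Or.inr he)))
    (hev.of_add_left C.isEvenDeg_edges) rfl).edges_add C

end Construction

/-- Type 𝒢 Equivalence: a finite vertical multigraph admits a
partition of its edges into alternating cycles iff every vertex has an even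
number of edges to strictly lower vertices and an even number of edges to
strictly higher vertices. -/
theorem altPartition_iff_even_degrees {n : ℕ} (E : Multiset (Fin n × Fin n))
    (hE : ∀ e ∈ E, e.1 < e.2) :
    AltPartition E ↔ ∀ v : Fin n, Even (ldeg E v) ∧ Even (hdeg E v) := by
  refine ⟨?_, altPartition_of_isEvenDeg E hE⟩
  rintro ⟨k, Cs, rfl⟩
  exact Finset.sum_induction _ IsEvenDeg (fun _ _ => IsEvenDeg.add) isEvenDeg_zero
    (fun i _ => (Cs i).isEvenDeg_edges)
end

section
/- If every vertex of a finite graph has even degree, then the edge set of the graph can be partitioned into cycles (Veblen's theorem). -/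
/-! Deleting an edge `ab` from a graph whose degrees are all even leaves `a` and `b` as its only
vertices of odd degree. The handshake lemma, applied to the component of `a`, then forces `b` into
that component, so every edge lies on a cycle. Removing the edges of a cycle keeps every degree
even, and induction over the (finite) lattice of graphs on `V` peels off cycles until no edge is
left. -/

open Finset

namespace SimpleGraph

variable {V : Type*} {G : SimpleGraph V}

lemma Walk.map_range_getVert_eq_edges {u v : V} (p : G.Walk u v) :
    (List.range p.length).map (fun j => s(p.getVert j, p.getVert (j + 1))) = p.edges :=
  List.ext_getElem (by simp) fun _ _ _ => by simp [getElem_edges]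

lemma Walk.IsTrail.even_card_filter_edgesFinset [DecidableEq V] {u : V} {c : G.Walk u u}
    (hc : c.IsTrail) (v : V) : Even #{e ∈ hc.edgesFinset | v ∈ e} := by
  have := (hc.even_countP_edges_iff v).mpr fun h => absurd rfl h
  rwa [List.countP_eq_length_filter] at this

variable [Fintype V]

lemma exists_ne_reachable_odd_degree [DecidableRel G.Adj] {v : V} (hv : Odd (G.degree v)) :
    ∃ w ≠ v, G.Reachable v w ∧ Odd (G.degree w) := by
  classical
  set s : Set V := {w | G.Reachable v w}
  have hdeg (w : s) : (G.induce s).degree w = G.degree w :=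
    degree_induce_of_neighborSet_subset fun _ hx => w.2.trans (Adj.reachable hx)
  obtain ⟨w, hwv, hw⟩ := (G.induce s).exists_ne_odd_degree_of_exists_odd_degree
    ⟨v, Reachable.refl v⟩ (by rwa [hdeg])
  exact ⟨w, fun h => hwv (Subtype.ext h), w.2, by rwa [← hdeg]⟩

variable [DecidableEq V]

lemma degree_deleteEdges_add_card_filter [DecidableRel G.Adj] (s : Finset (Sym2 V))
    [DecidableRel (G.deleteEdges s).Adj] (hs : s ⊆ G.edgeFinset) (v : V) :
    (G.deleteEdges s).degree v + #{e ∈ s | v ∈ e} = G.degree v := by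
  have hfilter :
      {e ∈ G.edgeFinset \ s | v ∈ e} = {e ∈ G.edgeFinset | v ∈ e} \ {e ∈ s | v ∈ e} := by
    ext
    simp only [mem_filter, mem_sdiff]
    tauto
  rw [← card_incidenceFinset_eq_degree, ← card_incidenceFinset_eq_degree,
    incidenceFinset_eq_filter, incidenceFinset_eq_filter, edgeFinset_deleteEdges, hfilter]
  exact card_sdiff_add_card_eq_card (filter_subset_filter _ hs)

lemma reachable_deleteEdges_of_even_degree [DecidableRel G.Adj] (h : ∀ v, Even (G.degree v))
    {a b : V} (hab : G.Adj a b) : (G.deleteEdges {s(a, b)}).Reachable a b := by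
  classical
  rw [← coe_singleton]
  set H := G.deleteEdges ↑({s(a, b)} : Finset (Sym2 V))
  have hdeg (v : V) : H.degree v + #{e ∈ {s(a, b)} | v ∈ e} = G.degree v :=
    degree_deleteEdges_add_card_filter _ (by simpa using hab) v
  obtain ⟨w, hwa, hreach, hw⟩ := exists_ne_reachable_odd_degree (G := H) (v := a)
    (by simpa [← hdeg a, filter_singleton, Nat.even_add_one] using h a)
  obtain rfl | hwb := eq_or_ne w b
  · exact hreach
  · have hdegw := hdeg w
    simp only [filter_singleton, Sym2.mem_iff, hwa, hwb, or_self, if_false, card_empty,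
      add_zero] at hdegw
    exact absurd (hdegw ▸ h w) (Nat.not_even_iff_odd.mpr hw)

lemma exists_isCycle_mem_edges_of_even_degree [DecidableRel G.Adj] (h : ∀ v, Even (G.degree v))
    {e : Sym2 V} (he : e ∈ G.edgeSet) : ∃ (u : V) (c : G.Walk u u), c.IsCycle ∧ e ∈ c.edges := by
  induction e using Sym2.ind with
  | _ a b =>
    exact adj_and_reachable_delete_edges_iff_exists_cycle.mp
      ⟨he, reachable_deleteEdges_of_even_degree h he⟩

lemma Walk.IsTrail.even_degree_deleteEdges [DecidableRel G.Adj] (h : ∀ v, Even (G.degree v))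
    {u : V} {c : G.Walk u u} (hc : c.IsTrail) [DecidableRel (G.deleteEdges hc.edgesFinset).Adj]
    (v : V) : Even ((G.deleteEdges hc.edgesFinset).degree v) := by
  have hdeg := degree_deleteEdges_add_card_filter hc.edgesFinset
    (fun _ he => mem_edgeFinset.mpr (c.edges_subset_edgeSet he)) v
  exact (Nat.even_add.mp (hdeg ▸ h v)).mpr (hc.even_card_filter_edgesFinset v)

theorem exists_isCycle_decomposition_of_even_degree (G : SimpleGraph V) [DecidableRel G.Adj]
    (h : ∀ v, Even (G.degree v)) :
    ∃ cs : List (Σ u, G.Walk u u), (∀ c ∈ cs, c.2.IsCycle) ∧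
      (cs.map fun c => (c.2.edges : Multiset (Sym2 V))).sum = G.edgeFinset.val := by
  revert ‹DecidableRel G.Adj› h
  induction G using WellFoundedLT.induction with
  | _ G ih =>
    intro _ h
    obtain hG | ⟨e, he⟩ := G.edgeSet.eq_empty_or_nonempty
    · refine ⟨[], by simp, ?_⟩
      simp [edgeFinset_eq_empty.mpr (edgeSet_eq_empty.mp hG)]
    obtain ⟨u, c, hc, hec⟩ := exists_isCycle_mem_edges_of_even_degree h he
    classical
    set T := hc.isTrail.edgesFinset
    have hT : T ⊆ G.edgeFinset := fun _ he => mem_edgeFinset.mpr (c.edges_subset_edgeSet he)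
    have hlt : G.deleteEdges T < G := lt_of_le_of_ne (deleteEdges_le _) fun heq =>
      Set.disjoint_left.mp (deleteEdges_eq_self.mp heq) he hec
    obtain ⟨cs, hcs, hsum⟩ := ih _ hlt (hc.isTrail.even_degree_deleteEdges h)
    refine ⟨⟨u, c⟩ :: cs.map fun d => ⟨d.1, d.2.mapLe (deleteEdges_le _)⟩, ?_, ?_⟩
    · simp only [List.mem_cons, List.mem_map]
      rintro _ (rfl | ⟨d, hd, rfl⟩)
      exacts [hc, (hcs d hd).mapLe _]
    · rw [List.map_cons, List.sum_cons, List.map_map, Function.comp_def]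
      simp only [Walk.edges_mapLe_eq_edges, hsum, edgeFinset_deleteEdges, sdiff_val]
      exact add_tsub_cancel_of_le (val_le_iff.mpr hT)

end SimpleGraph

/-- Veblen's theorem: if every vertex of a finite simple graph has
even degree, then the edge set can be partitioned into edge-disjoint cycles
(closed trails). -/
theorem veblen {V : Type*} [Fintype V] [DecidableEq V] (G : SimpleGraph V)
    [DecidableRel G.Adj] (h : ∀ v : V, Even (G.degree v)) :
    ∃ (k : ℕ) (len : Fin k → ℕ) (w : Fin k → ℕ → V),
      (∀ i, 0 < len i) ∧ (∀ i, w i (len i) = w i 0) ∧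
      (∀ i, ∀ j < len i, G.Adj (w i j) (w i (j + 1))) ∧
      (∑ i, (Multiset.range (len i)).map (fun j => s(w i j, w i (j + 1))))
        = G.edgeFinset.val := by
  obtain ⟨cs, hcs, hsum⟩ := G.exists_isCycle_decomposition_of_even_degree h
  refine ⟨cs.length, fun i => cs[i].2.length, fun i => cs[i].2.getVert,
    fun i => zero_lt_three.trans_le (hcs _ (List.getElem_mem _)).three_le_length,
    fun i => by simp, fun i _ hj => SimpleGraph.Walk.adj_getVert_succ _ hj, ?_⟩
  rw [← hsum, ← Fin.sum_univ_fun_getElem]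
  simp only [← Multiset.coe_range, Multiset.map_coe, SimpleGraph.Walk.map_range_getVert_eq_edges]
  rfl
end

section
/- Let G_1 and G_2 be finite simple graphs on the same vertically ordered vertex set. If there exists a vertex v such that the number of neighbors of v strictly below v in G_1 differs from the number of neighbors of v strictly below v in G_2, then the verbose persistence diagrams of G_1 and G_2 for the upward lower-star filtration are distinct. Equivalently, if the diagrams agree in the up direction, then ldeg_{G_1}(v) = ldeg_{G_2}(v) for all v. -/
/-! A vertex `v` has died by stage `j` exactly when, in the edges present at stage `j`, it is
connected to a lower vertex. Adding one edge merges at most two components, and of the two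
component minima only the higher one dies, so the `edgesAt E j` edges entering at height `j`
kill at most `edgesAt E j` classes. Hence the truncated subtraction in `cyclesBornAt` loses
nothing, `edgesAt E j = deaths0At E j + cyclesBornAt E j` is read off the diagram, and
`ldeg E v = edgesAt E v`. -/

open Finset

section Reach

variable {n : ℕ} {F G : Multiset (Fin n × Fin n)} {e : Fin n × Fin n} {a b c : Fin n}

lemma Reach.symm (h : Reach F a b) : Reach F b a :=
  (@Relation.ReflTransGen.stdSymm _ _ ⟨fun _ _ hxy => hxy.symm⟩).symm _ _ h

lemma Reach.trans (h : Reach F a b) (h' : Reach F b c) : Reach F a c :=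
  Relation.ReflTransGen.trans h h'

lemma Reach.mono (hFG : F ≤ G) (h : Reach F a b) : Reach G a b :=
  Relation.ReflTransGen.mono
    (fun _ _ => Or.imp (Multiset.mem_of_le hFG) (Multiset.mem_of_le hFG)) _ _ h

lemma Reach.eq_of_zero (h : Reach 0 a b) : a = b := by
  induction h with
  | refl => rfl
  | tail _ hstep => simp at hstep

lemma Reach.of_cons (h : Reach (e ::ₘ F) a b) :
    Reach F a b ∨ (Reach F a e.1 ∧ Reach F e.2 b) ∨ (Reach F a e.2 ∧ Reach F e.1 b) := by
  induction h with
  | refl => exact Or.inl .refl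
  | @tail x y _ hstep ih =>
    rcases hstep with hs | hs <;> rcases Multiset.mem_cons.1 hs with rfl | hs
    · rcases ih with ih | ih | ih
      · exact Or.inr (Or.inl ⟨ih, .refl⟩)
      · exact Or.inr (Or.inl ⟨ih.1, .refl⟩)
      · exact Or.inl ih.1
    · have step : ∀ {z}, Reach F z x → Reach F z y := (·.tail (Or.inl hs))
      exact ih.imp step (Or.imp (And.imp_right step) (And.imp_right step))
    · rcases ih with ih | ih | ih
      · exact Or.inr (Or.inr ⟨ih, .refl⟩)
      · exact Or.inl ih.1
      · exact Or.inr (Or.inr ⟨ih.1, .refl⟩)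
    · have step : ∀ {z}, Reach F z x → Reach F z y := (·.tail (Or.inr hs))
      exact ih.imp step (Or.imp (And.imp_right step) (And.imp_right step))

end Reach

open Classical in
noncomputable def deadSet {n : ℕ} (F : Multiset (Fin n × Fin n)) : Finset (Fin n) :=
  univ.filter fun v => ∃ u < v, Reach F u v

section deadSet

variable {n : ℕ} {F G : Multiset (Fin n × Fin n)} {e : Fin n × Fin n} {v w : Fin n}

lemma mem_deadSet : v ∈ deadSet F ↔ ∃ u < v, Reach F u v := by
  simp [deadSet]

lemma notMem_deadSet : v ∉ deadSet F ↔ ∀ u, Reach F u v → v ≤ u := by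
  simp only [mem_deadSet, not_exists, not_and]
  exact forall_congr' fun u => ⟨fun h hr => not_lt.1 fun hlt => h hlt hr,
    fun h hlt hr => (h hr).not_gt hlt⟩

lemma deadSet_mono (hFG : F ≤ G) : deadSet F ⊆ deadSet G := fun _ hv =>
  let ⟨u, hu, h⟩ := mem_deadSet.1 hv
  mem_deadSet.2 ⟨u, hu, h.mono hFG⟩

@[simp]
lemma deadSet_zero : deadSet (0 : Multiset (Fin n × Fin n)) = ∅ :=
  Finset.eq_empty_of_forall_notMem fun _ hv =>
    let ⟨_, hu, h⟩ := mem_deadSet.1 hv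
    hu.ne h.eq_of_zero

lemma eq_of_reach_of_notMem_deadSet (h : Reach F v w) (hv : v ∉ deadSet F)
    (hw : w ∉ deadSet F) : v = w :=
  le_antisymm (notMem_deadSet.1 hv w h.symm) (notMem_deadSet.1 hw v h)

lemma exists_of_mem_deadSet_cons_of_notMem (hv : v ∈ deadSet (e ::ₘ F)) (hvF : v ∉ deadSet F) :
    ∃ u < v, (Reach F u e.1 ∧ Reach F e.2 v) ∨ (Reach F u e.2 ∧ Reach F e.1 v) := by
  obtain ⟨u, hu, h⟩ := mem_deadSet.1 hv
  rcases h.of_cons with h | h | h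
  · exact absurd (mem_deadSet.2 ⟨u, hu, h⟩) hvF
  · exact ⟨u, hu, Or.inl h⟩
  · exact ⟨u, hu, Or.inr h⟩

lemma card_deadSet_cons_le (F : Multiset (Fin n × Fin n)) (e : Fin n × Fin n) :
    #(deadSet (e ::ₘ F)) ≤ #(deadSet F) + 1 := by
  classical
  -- Two newly dead vertices hanging off the same endpoint are the minimum of one component;
  -- off opposite endpoints, each would lie strictly below the other.
  have hnew : #(deadSet (e ::ₘ F) \ deadSet F) ≤ 1 := by
    refine Finset.card_le_one.2 fun v hv w hw => ?_
    obtain ⟨hv, hvF⟩ := Finset.mem_sdiff.1 hv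
    obtain ⟨hw, hwF⟩ := Finset.mem_sdiff.1 hw
    have lowest := fun {x y} (hx : x ∉ deadSet F) (h : Reach F y x) => notMem_deadSet.1 hx y h
    obtain ⟨u, hu, ⟨hu1, h2v⟩ | ⟨hu2, h1v⟩⟩ := exists_of_mem_deadSet_cons_of_notMem hv hvF <;>
    obtain ⟨u', hu', ⟨hu'1, h2w⟩ | ⟨hu'2, h1w⟩⟩ := exists_of_mem_deadSet_cons_of_notMem hw hwF
    · exact eq_of_reach_of_notMem_deadSet (h2v.symm.trans h2w) hvF hwF
    · exact ((lowest hwF (hu1.trans h1w)).trans_lt hu).not_gt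
        ((lowest hvF (hu'2.trans h2v)).trans_lt hu') |>.elim
    · exact ((lowest hwF (hu2.trans h2w)).trans_lt hu).not_gt
        ((lowest hvF (hu'1.trans h1v)).trans_lt hu') |>.elim
    · exact eq_of_reach_of_notMem_deadSet (h1v.symm.trans h1w) hvF hwF
  have := Finset.card_le_card_sdiff_add_card (s := deadSet (e ::ₘ F)) (t := deadSet F)
  omega

lemma card_deadSet_add_le (F A : Multiset (Fin n × Fin n)) :
    #(deadSet (F + A)) ≤ #(deadSet F) + Multiset.card A := by
  induction A using Multiset.induction with
  | empty => simp
  | cons a A ih =>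
    rw [Multiset.add_cons, Multiset.card_cons]
    exact (card_deadSet_cons_le _ a).trans (by omega)

end deadSet

section Filtration

variable {n : ℕ} {E : Multiset (Fin n × Fin n)} {v : Fin n} {i j : ℕ}

lemma death0_le_of_mem_deadSet (hv : v ∈ deadSet (levelEdges E i)) : death0 E v ≤ i :=
  sInf_le ⟨i, mem_deadSet.1 hv, rfl⟩

lemma mem_deadSet_of_death0_eq (hv : death0 E v = j) : v ∈ deadSet (levelEdges E j) := by
  have hne : ((fun j : ℕ => (j : ℕ∞)) '' {j | ∃ u < v, Reach (levelEdges E j) u v}).Nonempty := by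
    by_contra h
    rw [Set.not_nonempty_iff_eq_empty] at h
    simp [death0, h] at hv
  obtain ⟨i, hi, hij⟩ := csInf_mem hne
  rw [← death0, hv, Nat.cast_inj] at hij
  exact mem_deadSet.2 (hij ▸ hi)

lemma levelEdges_eq_filter_lt_add (E : Multiset (Fin n × Fin n)) (j : ℕ) :
    levelEdges E j = E.filter (fun e => (e.2 : ℕ) < j) + E.filter (fun e => (e.2 : ℕ) = j) := by
  rw [Multiset.filter_add_filter, add_eq_left.2 (Multiset.filter_eq_nil.2 fun _ _ h => h.1.ne h.2)]
  exact Multiset.filter_congr fun _ _ => le_iff_lt_or_eq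

lemma exists_lt_of_mem_deadSet_filter_lt (hv : v ∈ deadSet (E.filter fun e => (e.2 : ℕ) < j)) :
    ∃ i < j, v ∈ deadSet (levelEdges E i) := by
  cases j with
  | zero => simp at hv
  | succ i =>
    refine ⟨i, i.lt_succ_self, ?_⟩
    simpa only [levelEdges, Nat.lt_succ_iff] using hv

open Classical in
lemma deaths0At_eq_card_filter (E : Multiset (Fin n × Fin n)) (j : ℕ) :
    deaths0At E j = #(univ.filter fun v => death0 E v = j) := by
  rw [deaths0At, Nat.card_eq_fintype_card, Fintype.card_subtype]

lemma deaths0At_le_edgesAt (E : Multiset (Fin n × Fin n)) (j : ℕ) :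
    deaths0At E j ≤ edgesAt E j := by
  classical
  set before := E.filter fun e => (e.2 : ℕ) < j
  have hdying :
      (univ.filter fun v => death0 E v = j) ⊆ deadSet (levelEdges E j) \ deadSet before := by
    intro v hv
    have hv : death0 E v = j := (Finset.mem_filter.1 hv).2
    refine Finset.mem_sdiff.2 ⟨mem_deadSet_of_death0_eq hv, fun hbefore => ?_⟩
    obtain ⟨i, hij, hi⟩ := exists_lt_of_mem_deadSet_filter_lt hbefore
    exact (death0_le_of_mem_deadSet hi).not_gt (hv ▸ Nat.cast_lt.2 hij)
  have hsub : deadSet before ⊆ deadSet (levelEdges E j) :=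
    deadSet_mono (levelEdges_eq_filter_lt_add E j ▸ Multiset.le_add_right _ _)
  have hcard := card_deadSet_add_le before (E.filter fun e => (e.2 : ℕ) = j)
  rw [← levelEdges_eq_filter_lt_add] at hcard
  rw [deaths0At_eq_card_filter]
  calc _ ≤ #(deadSet (levelEdges E j) \ deadSet before) := Finset.card_le_card hdying
    _ = #(deadSet (levelEdges E j)) - #(deadSet before) := Finset.card_sdiff_of_subset hsub
    _ ≤ edgesAt E j := by unfold edgesAt; omega

open Classical in
lemma deaths0At_eq_countP_diag0 (E : Multiset (Fin n × Fin n)) (j : ℕ) :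
    deaths0At E j = (diag0 E).countP fun p => p.2 = (j : ℕ∞) := by
  rw [deaths0At_eq_card_filter, diag0, Multiset.countP_map]
  rfl

lemma edgesAt_eq_of_upDiagEq {E₁ E₂ : Multiset (Fin n × Fin n)} (h : UpDiagEq E₁ E₂) (j : ℕ) :
    edgesAt E₁ j = edgesAt E₂ j := by
  have hdeaths : deaths0At E₁ j = deaths0At E₂ j := by
    classical
    rw [deaths0At_eq_countP_diag0, deaths0At_eq_countP_diag0, h.1]
  have hcycles := h.2 j
  unfold cyclesBornAt at hcycles
  have := deaths0At_le_edgesAt E₁ j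
  have := deaths0At_le_edgesAt E₂ j
  omega

lemma ldeg_eq_edgesAt (E : Multiset (Fin n × Fin n)) (v : Fin n) : ldeg E v = edgesAt E v :=
  congrArg Multiset.card (Multiset.filter_congr fun _ _ => Fin.val_inj.symm)

end Filtration

theorem ldeg_ne_implies_upDiag_ne_general {n : ℕ} (E1 E2 : Finset (Fin n × Fin n))
    (hv : ∃ v : Fin n, ldeg E1.val v ≠ ldeg E2.val v) :
    ¬ UpDiagEq E1.val E2.val := by
  intro h
  obtain ⟨v, hv⟩ := hv
  exact hv (by rw [ldeg_eq_edgesAt, ldeg_eq_edgesAt, edgesAt_eq_of_upDiagEq h])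

/-- If two vertical graphs on the same vertex set have a vertex with
different numbers of neighbours strictly below, then their verbose persistence
diagrams for the upward lower-star filtration are distinct. -/
theorem ldeg_ne_implies_upDiag_ne {n : ℕ} (E1 E2 : Finset (Fin n × Fin n))
    (h1 : ∀ e ∈ E1, e.1 < e.2) (h2 : ∀ e ∈ E2, e.1 < e.2)
    (hv : ∃ v : Fin n, ldeg E1.val v ≠ ldeg E2.val v) :
    ¬ UpDiagEq E1.val E2.val :=
  ldeg_ne_implies_upDiag_ne_general E1 E2 hv
end

section
/- Let (G_1, G_2) be a pair of vertical graphs on a common collinear vertex set whose verbose diagrams agree in both the up and the down directions, and let C be an alternating cycle in a fixed partition of G_1 ⊔ G_2 into alternating cycles. Form G_1' = G_1 ⊔ C_up and G_2' = G_2 ⊔ C_down where C_up, C_down are the up- and down-edges of an extra copy of C (creating multi-edges). Then the up-direction changes to the verbose diagram data are identical for G_1' and G_2': for every vertex v, the number of new edges with upper endpoint v added to G_1' equals the number added to G_2', and no new 0-dimensional connectivity merges occur (every new edge is parallel to an existing edge, hence creates a 1-cycle). -/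
/-! The `j`-th up-edge and the `j`-th down-edge of an alternating cycle share their upper
endpoint `w (2j+1)`, so the two halves of a cycle contribute equally at every vertex. The
edges of the extra copy already lie in `G₁` resp. `G₂`, and `death0` only sees which edges
are present at each level, never their multiplicities. -/

theorem AltCycle.ldeg_upEdges_eq_ldeg_downEdges {n : ℕ} (C : AltCycle n) (v : Fin n) :
    ldeg C.upEdges v = ldeg C.downEdges v := by
  simp only [ldeg, AltCycle.upEdges, AltCycle.downEdges, Multiset.filter_map,
    Multiset.card_map, Function.comp_def]

theorem reach_eq_of_mem_iff {n : ℕ} {E F : Multiset (Fin n × Fin n)}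
    (h : ∀ e, e ∈ E ↔ e ∈ F) : Reach E = Reach F := by
  funext a b
  simp only [Reach, h]

theorem death0_eq_of_mem_iff {n : ℕ} {E F : Multiset (Fin n × Fin n)}
    (h : ∀ e, e ∈ E ↔ e ∈ F) : death0 E = death0 F := by
  have hlevel (j : ℕ) : Reach (levelEdges E j) = Reach (levelEdges F j) :=
    reach_eq_of_mem_iff fun e => by simp only [levelEdges, Multiset.mem_filter, h]
  funext v
  simp only [death0, hlevel]

theorem death0_add_of_subset {n : ℕ} {E S : Multiset (Fin n × Fin n)} (hS : S ⊆ E) :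
    death0 (E + S) = death0 E :=
  death0_eq_of_mem_iff fun _ => Multiset.mem_add.trans (or_iff_left_of_imp (@hS _))

theorem add_cycle_copy_identical_changes_general {n : ℕ} (E1 E2 : Finset (Fin n × Fin n))
    (k : ℕ) (Cs : Fin k → AltCycle n)
    (hp1 : E1.val = ∑ i, (Cs i).upEdges) (hp2 : E2.val = ∑ i, (Cs i).downEdges)
    (i0 : Fin k) :
    (∀ v : Fin n, ldeg (Cs i0).upEdges v = ldeg (Cs i0).downEdges v) ∧
    (∀ e ∈ (Cs i0).upEdges, e ∈ E1.val) ∧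
    (∀ e ∈ (Cs i0).downEdges, e ∈ E2.val) ∧
    (∀ v : Fin n,
      death0 (E1.val + (Cs i0).upEdges) v = death0 E1.val v ∧
      death0 (E2.val + (Cs i0).downEdges) v = death0 E2.val v) := by
  have hup : (Cs i0).upEdges ⊆ E1.val := fun _ he =>
    hp1 ▸ Multiset.mem_sum.2 ⟨i0, Finset.mem_univ _, he⟩
  have hdown : (Cs i0).downEdges ⊆ E2.val := fun _ he =>
    hp2 ▸ Multiset.mem_sum.2 ⟨i0, Finset.mem_univ _, he⟩
  exact ⟨(Cs i0).ldeg_upEdges_eq_ldeg_downEdges, hup, hdown, fun v =>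
    ⟨congrFun (death0_add_of_subset hup) v, congrFun (death0_add_of_subset hdown) v⟩⟩

/-- Let `(G₁, G₂)` have equal VPHT and let the disjoint union be
partitioned into alternating cycles, `G₁` holding the up-edges and `G₂` the
down-edges. Adding an extra copy of one cycle `C` (its up-edges to `G₁`, its
down-edges to `G₂`) changes the up-direction diagram data identically: each vertex
is the upper endpoint of equally many new edges on both sides, every new edge is
parallel to an existing one, and no 0-dimensional connectivity merges occur. -/
theorem add_cycle_copy_identical_changes {n : ℕ} (E1 E2 : Finset (Fin n × Fin n))
    (h1 : ∀ e ∈ E1, e.1 < e.2) (h2 : ∀ e ∈ E2, e.1 < e.2)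
    (hV : VPHTEq E1.val E2.val)
    (k : ℕ) (Cs : Fin k → AltCycle n)
    (hp1 : E1.val = ∑ i, (Cs i).upEdges) (hp2 : E2.val = ∑ i, (Cs i).downEdges)
    (i0 : Fin k) :
    (∀ v : Fin n, ldeg (Cs i0).upEdges v = ldeg (Cs i0).downEdges v) ∧
    (∀ e ∈ (Cs i0).upEdges, e ∈ E1.val) ∧
    (∀ e ∈ (Cs i0).downEdges, e ∈ E2.val) ∧
    (∀ v : Fin n,
      death0 (E1.val + (Cs i0).upEdges) v = death0 E1.val v ∧
      death0 (E2.val + (Cs i0).downEdges) v = death0 E2.val v) :=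
  add_cycle_copy_identical_changes_general E1 E2 k Cs hp1 hp2 i0
end
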